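/- There exists a constant C > 0 such that for all x, y in the closed half-plane H̄ = {x ∈ ℝ² : x₁ ≤ 0} with x ≠ y, Boggio's biharmonic Green function of the half-plane satisfies the growth bound |G_H(x,y)| ≤ C (1 + |x|² + |y|²)(1 + (log|x|)₊ + (log|y|)₊), where (log s)₊ = max(log s, 0). -/

import Mathlib

open MeasureTheory Real Filter

noncomputable section

/-- ℝ² with the Euclidean norm. -/
abbrev E2 : Type := EuclideanSpace ℝ (Fin 2)

/-- The open half-plane `H = {x ∈ ℝ² : x₁ < 0}`. -/
def Hset : Set E2 := {x : E2 | x 0 < 0}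

/-- Reflection `x* = (−x₁, x₂)` across `∂H`. -/
def refl2 (x : E2) : E2 := WithLp.toLp 2 (fun i => if i = 0 then -(x 0) else x i)

/-- The boundary point `(0, t) ∈ ∂H`. -/
def bd (t : ℝ) : E2 := WithLp.toLp 2 (fun i => if i = 0 then 0 else t)

/-- The Laplace operator `Δf = ∑ᵢ ∂²f/∂xᵢ²`. -/
def lap (f : E2 → ℝ) (x : E2) : ℝ :=
  ∑ i, iteratedFDeriv ℝ 2 f x ![EuclideanSpace.single i 1, EuclideanSpace.single i 1]

/-- The partial derivative `∂₁ f` with respect to the first coordinate. -/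
def pd1 (f : E2 → ℝ) (x : E2) : ℝ := fderiv ℝ f x (EuclideanSpace.single 0 1)

/-- Boggio's biharmonic Green function of the half-plane `H ⊆ ℝ²`. -/
def boggio2 (x y : E2) : ℝ :=
  (1 / (8 * π)) * dist x y ^ 2 *
    ∫ v in (1:ℝ)..(dist (refl2 x) y / dist x y), (v ^ 2 - 1) / v


/-! For `x, y` in the closed half-plane, `d := |x − y| ≤ D := |x* − y|`, so `A := D / d ≥ 1` and
`∫₁^A (v² − 1)/v dv = (A² − 1)/2 − log A ∈ [0, (A² − 1)/2]`. Hence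
`0 ≤ G_H(x,y) ≤ (D² − d²)/(16π) ≤ (|x|² + |y|²)/(8π)`, using `D ≤ |x*| + |y| = |x| + |y|`. -/

lemma integral_sq_sub_one_div {A : ℝ} (hA : 0 < A) :
    ∫ v in (1:ℝ)..A, (v ^ 2 - 1) / v = (A ^ 2 - 1) / 2 - log A := by
  have hne : ∀ v ∈ Set.uIcc 1 A, v ≠ 0 := fun v hv =>
    (lt_of_lt_of_le (lt_min one_pos hA) hv.1).ne'
  have hsplit : Set.EqOn (fun v : ℝ => (v ^ 2 - 1) / v) (fun v => v - v⁻¹) (Set.uIcc 1 A) := by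
    intro v hv
    have := hne v hv
    field_simp
  have hinv : IntervalIntegrable (fun v : ℝ => v⁻¹) volume 1 A :=
    intervalIntegral.intervalIntegrable_inv hne continuousOn_id
  rw [intervalIntegral.integral_congr hsplit,
    intervalIntegral.integral_sub intervalIntegral.intervalIntegrable_id hinv, integral_id,
    integral_inv_of_pos one_pos hA, div_one]
  ring

lemma integral_sq_sub_one_div_mem_Icc {A : ℝ} (hA : 1 ≤ A) :
    ∫ v in (1:ℝ)..A, (v ^ 2 - 1) / v ∈ Set.Icc 0 ((A ^ 2 - 1) / 2) := by
  rw [integral_sq_sub_one_div (by linarith)]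
  have hlog_le : log A ≤ A - 1 := log_le_sub_one_of_pos (by linarith)
  constructor <;> nlinarith [log_nonneg hA]

lemma dist_le_dist_refl2 {x y : E2} (hx : x 0 ≤ 0) (hy : y 0 ≤ 0) :
    dist x y ≤ dist (refl2 x) y := by
  rw [EuclideanSpace.dist_eq, EuclideanSpace.dist_eq]
  apply Real.sqrt_le_sqrt
  simp only [Fin.sum_univ_two, refl2, Real.dist_eq, sq_abs, Fin.isValue, ↓reduceIte,
    one_ne_zero]
  nlinarith [mul_nonneg_of_nonpos_of_nonpos hx hy]

lemma norm_refl2 (x : E2) : ‖refl2 x‖ = ‖x‖ := by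
  simp [EuclideanSpace.norm_eq, Fin.sum_univ_two, refl2]

lemma dist_refl2_sq_le (x y : E2) : dist (refl2 x) y ^ 2 ≤ 2 * (‖x‖ ^ 2 + ‖y‖ ^ 2) := by
  have hD : dist (refl2 x) y ≤ ‖x‖ + ‖y‖ := norm_refl2 x ▸ dist_le_norm_add_norm _ _
  nlinarith [dist_nonneg (x := refl2 x) (y := y), sq_nonneg (‖x‖ - ‖y‖)]

lemma boggio2_mem_Icc {x y : E2} (hx : x 0 ≤ 0) (hy : y 0 ≤ 0) :
    boggio2 x y ∈ Set.Icc 0 (dist (refl2 x) y ^ 2 / (16 * π)) := by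
  rcases eq_or_ne x y with rfl | hxy
  · have hxx : boggio2 x x = 0 := by simp [boggio2]
    rw [hxx]
    exact ⟨le_rfl, by positivity⟩
  set d := dist x y
  set D := dist (refl2 x) y
  have hd : 0 < d := dist_pos.2 hxy
  have hA : 1 ≤ D / d := (one_le_div hd).2 (dist_le_dist_refl2 hx hy)
  obtain ⟨hI0, hI1⟩ := integral_sq_sub_one_div_mem_Icc hA
  simp only [boggio2, Set.mem_Icc]
  constructor
  · positivity
  · calc 1 / (8 * π) * d ^ 2 * ∫ v in (1:ℝ)..D / d, (v ^ 2 - 1) / v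
        ≤ 1 / (8 * π) * d ^ 2 * (((D / d) ^ 2 - 1) / 2) := by gcongr
      _ = (D ^ 2 - d ^ 2) / (16 * π) := by field_simp; ring
      _ ≤ D ^ 2 / (16 * π) := by gcongr; nlinarith

lemma abs_boggio2_le {x y : E2} (hx : x 0 ≤ 0) (hy : y 0 ≤ 0) :
    |boggio2 x y| ≤ (‖x‖ ^ 2 + ‖y‖ ^ 2) / (8 * π) := by
  obtain ⟨hG0, hG1⟩ := boggio2_mem_Icc hx hy
  rw [abs_of_nonneg hG0]
  calc boggio2 x y ≤ dist (refl2 x) y ^ 2 / (16 * π) := hG1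
    _ ≤ 2 * (‖x‖ ^ 2 + ‖y‖ ^ 2) / (16 * π) := by gcongr; exact dist_refl2_sq_le x y
    _ = (‖x‖ ^ 2 + ‖y‖ ^ 2) / (8 * π) := by ring

/-- growth bound for Boggio's Green function of the half-plane on
`H̄ = {x₁ ≤ 0}`. -/
theorem boggio2_growth_bound :
    ∃ C > (0:ℝ), ∀ x y : E2, x 0 ≤ 0 → y 0 ≤ 0 → x ≠ y →
      |boggio2 x y| ≤ C * (1 + ‖x‖ ^ 2 + ‖y‖ ^ 2)
        * (1 + max (Real.log ‖x‖) 0 + max (Real.log ‖y‖) 0) := by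
  refine ⟨1, one_pos, fun x y hx hy _ => ?_⟩
  have hquad : (‖x‖ ^ 2 + ‖y‖ ^ 2) / (8 * π) ≤ 1 + ‖x‖ ^ 2 + ‖y‖ ^ 2 := by
    rw [div_le_iff₀ (by positivity)]
    nlinarith [pi_gt_three, sq_nonneg ‖x‖, sq_nonneg ‖y‖]
  have hlog : 1 ≤ 1 + max (Real.log ‖x‖) 0 + max (Real.log ‖y‖) 0 := by
    linarith [le_max_right (Real.log ‖x‖) 0, le_max_right (Real.log ‖y‖) 0]
  calc |boggio2 x y| ≤ 1 + ‖x‖ ^ 2 + ‖y‖ ^ 2 := (abs_boggio2_le hx hy).trans hquad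
    _ ≤ 1 * (1 + ‖x‖ ^ 2 + ‖y‖ ^ 2) * (1 + max (Real.log ‖x‖) 0 + max (Real.log ‖y‖) 0) := by
      rw [one_mul]; exact le_mul_of_one_le_right (by positivity) hlog

end
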